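/- For every τ-structure 𝔄 and every set 𝒳 ⊆ R(𝔄) of relations on 𝔄, there exist a τ-structure 𝔅 of cardinality at most |𝒳| + |τ| + ℵ₀ and an element-total partial elementary team map ι: 𝔅 → 𝔄 ({b} ∈ dom(ι) for every b ∈ B) such that 𝒳 ⊆ ran(ι) and 𝔅 satisfies every existential second-order (ESO) sentence over τ that 𝔄 satisfies. -/

import Mathlib

open FirstOrder Language Set

universe u v w x

namespace TeamSem

/-- A purely relational language consisting of `k` fresh relation symbols with
prescribed arities. -/
def relLang (k : ℕ) (ar : Fin k → ℕ) : FirstOrder.Language where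
  Functions := fun _ => Empty
  Relations := fun n => {i : Fin k // ar i = n}

/-- Interpret the `k` fresh relation symbols by the given relations on `M`. -/
def relStructure {k : ℕ} {ar : Fin k → ℕ} {M : Type w}
    (S : ∀ i : Fin k, Set (Fin (ar i) → M)) : (relLang k ar).Structure M where
  funMap := fun f _ => f.elim
  RelMap := fun R v => (fun j => v (Fin.cast R.2 j)) ∈ S R.1

/-- Satisfaction of a first-order sentence over `L` together with `k` fresh relation
symbols, in the expansion of `M` interpreting the fresh symbols by `S`. -/
def RealizeWith {L : FirstOrder.Language.{u, v}} (M : Type w) [L.Structure M] {k : ℕ} {ar : Fin k → ℕ}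
    (φ : (L.sum (relLang k ar)).Sentence) (S : ∀ i : Fin k, Set (Fin (ar i) → M)) : Prop :=
  letI := relStructure S
  M ⊨ φ

/-- An existential second-order sentence over `L`: finitely many fresh relation symbols
together with a first-order sentence over the enlarged language. -/
structure ESOSentence (L : FirstOrder.Language.{u, v}) where
  k : ℕ
  ar : Fin k → ℕ
  toSentence : (L.sum (relLang k ar)).Sentence

/-- Satisfaction of an existential second-order sentence. -/
def ESOSentence.Realize {L : FirstOrder.Language.{u, v}} (ψ : ESOSentence L) (M : Type w)
    [L.Structure M] : Prop :=
  ∃ S : ∀ i : Fin ψ.k, Set (Fin (ψ.ar i) → M), RealizeWith M ψ.toSentence S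

/-- The Cartesian product of an `n`-ary and an `m`-ary relation. -/
def teamProd {A : Type w} {n m : ℕ} (X : Set (Fin n → A)) (Y : Set (Fin m → A)) :
    Set (Fin (n + m) → A) :=
  {s | (fun i => s (Fin.castAdd m i)) ∈ X ∧ (fun j => s (Fin.natAdd n j)) ∈ Y}

/-- The generalized projection `Pr_ι` of an `n`-ary relation. -/
def teamProj {A : Type w} {n m : ℕ} (ι : Fin m → Fin n) (X : Set (Fin n → A)) :
    Set (Fin m → A) :=
  (fun b => b ∘ ι) '' X

/-- The diagonal (identity) relation on `A`. -/
def diag (A : Type w) : Set (Fin 2 → A) := {s | s 0 = s 1}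

/-- The interpretation of a relation symbol, as a set of tuples. -/
def relSet (L : FirstOrder.Language.{u, v}) (A : Type w) [L.Structure A] {n : ℕ} (R : L.Relations n) :
    Set (Fin n → A) :=
  {s | Structure.RelMap R s}

/-- The graph of the interpretation of a function symbol, as a set of tuples. -/
def funGraph (L : FirstOrder.Language.{u, v}) (A : Type w) [L.Structure A] {n : ℕ} (F : L.Functions n) :
    Set (Fin (n + 1) → A) :=
  {s | Structure.funMap F (fun i => s i.castSucc) = s (Fin.last n)}

/-- A family of relations on `A` that is closed under the operations generating the
closure `cl`; a family `𝒴` satisfies `𝒴 = cl(𝒴)` precisely when it is closed. -/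
structure IsClosedFamily (L : FirstOrder.Language.{u, v}) (A : Type w) [L.Structure A]
    (𝒴 : ∀ n : ℕ, Set (Set (Fin n → A))) : Prop where
  empty_mem : ∀ n, (∅ : Set (Fin n → A)) ∈ 𝒴 n
  univ_mem : ∀ n, (Set.univ : Set (Fin n → A)) ∈ 𝒴 n
  inter_mem : ∀ (n : ℕ) (X Y : Set (Fin n → A)), X ∈ 𝒴 n → Y ∈ 𝒴 n → X ∩ Y ∈ 𝒴 n
  prod_mem : ∀ (n m : ℕ) (X : Set (Fin n → A)) (Y : Set (Fin m → A)),
    X ∈ 𝒴 n → Y ∈ 𝒴 m → teamProd X Y ∈ 𝒴 (n + m)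
  proj_mem : ∀ (n m : ℕ) (ι : Fin m → Fin n) (X : Set (Fin n → A)),
    X ∈ 𝒴 n → teamProj ι X ∈ 𝒴 m
  diag_mem : diag A ∈ 𝒴 2
  rel_mem : ∀ (n : ℕ) (R : L.Relations n), relSet L A R ∈ 𝒴 n
  graph_mem : ∀ (n : ℕ) (F : L.Functions n), funGraph L A F ∈ 𝒴 (n + 1)

/-- A partial team map from `A` to `B`.  Arities are preserved by typing; the domain
and the range are closed families (equivalently, `dom f = cl(dom f)` and
`ran f = cl(ran f)`); the empty relation of each arity is mapped to the empty relation
(in the untyped setting this is automatic for arity-preserving maps). -/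
structure PartialTeamMap (L : FirstOrder.Language.{u, v}) (A : Type w) (B : Type x)
    [L.Structure A] [L.Structure B] where
  dom : ∀ n : ℕ, Set (Set (Fin n → A))
  toFun : ∀ n : ℕ, Set (Fin n → A) → Set (Fin n → B)
  dom_closed : IsClosedFamily L A dom
  ran_closed : IsClosedFamily L B fun n => toFun n '' dom n
  map_empty : ∀ n, toFun n (∅ : Set (Fin n → A)) = ∅

namespace PartialTeamMap

variable {L : FirstOrder.Language.{u, v}} {A : Type w} {B : Type x} [L.Structure A] [L.Structure B]

/-- The range family of a partial team map. -/
def ran (f : PartialTeamMap L A B) : ∀ n : ℕ, Set (Set (Fin n → B)) :=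
  fun n => f.toFun n '' f.dom n

/-- Conditions (PI1)–(PI6): `f` is a partial team isomorphism. -/
structure IsIso (f : PartialTeamMap L A B) : Prop where
  empty_iff : ∀ (n : ℕ) (X : Set (Fin n → A)), X ∈ f.dom n → (X = ∅ ↔ f.toFun n X = ∅)
  univ_iff : ∀ (n : ℕ) (X : Set (Fin n → A)), X ∈ f.dom n →
    (X = Set.univ ↔ f.toFun n X = Set.univ)
  singleton_iff : ∀ (n : ℕ) (X : Set (Fin n → A)), X ∈ f.dom n →
    ((∃ s, X = {s}) ↔ ∃ t, f.toFun n X = {t})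
  map_prod : ∀ (n m : ℕ) (X : Set (Fin n → A)) (Y : Set (Fin m → A)),
    X ∈ f.dom n → Y ∈ f.dom m →
    f.toFun (n + m) (teamProd X Y) = teamProd (f.toFun n X) (f.toFun m Y)
  map_proj : ∀ (n m : ℕ) (ι : Fin m → Fin n) (X : Set (Fin n → A)), X ∈ f.dom n →
    f.toFun m (teamProj ι X) = teamProj ι (f.toFun n X)
  subset_iff : ∀ (n : ℕ) (X Y : Set (Fin n → A)), X ∈ f.dom n → Y ∈ f.dom n →
    (X ⊆ Y ↔ f.toFun n X ⊆ f.toFun n Y)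
  map_diag : f.toFun 2 (diag A) = diag B
  map_rel : ∀ (n : ℕ) (R : L.Relations n), f.toFun n (relSet L A R) = relSet L B R
  map_graph : ∀ (n : ℕ) (F : L.Functions n), f.toFun (n + 1) (funGraph L A F) = funGraph L B F

/-- `f` is a partial elementary team map: it preserves (in both directions) all
first-order sentences over `L` augmented by fresh relation symbols interpreted by
nonempty relations from the domain of `f`. -/
def IsElementary (f : PartialTeamMap L A B) : Prop :=
  ∀ (k : ℕ) (ar : Fin k → ℕ) (φ : (L.sum (relLang k ar)).Sentence)
    (X : ∀ i : Fin k, Set (Fin (ar i) → A)),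
    (∀ i, X i ∈ f.dom (ar i)) → (∀ i, (X i).Nonempty) →
    (RealizeWith A φ X ↔ RealizeWith B φ fun i => f.toFun (ar i) (X i))

/-- `f` is total: its domain consists of all relations on `A`. -/
def Total (f : PartialTeamMap L A B) : Prop := ∀ n, f.dom n = Set.univ

/-- Every singleton `{a}`, `a : A`, of arity 1 is in the domain of `f`. -/
def ElementTotal (f : PartialTeamMap L A B) : Prop :=
  ∀ a : A, ({fun _ => a} : Set (Fin 1 → A)) ∈ f.dom 1

/-- Every singleton `{b}`, `b : B`, of arity 1 is in the range of `f`. -/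
def ElementSurjective (f : PartialTeamMap L A B) : Prop :=
  ∀ b : B, ({fun _ => b} : Set (Fin 1 → B)) ∈ f.ran 1

end PartialTeamMap

end TeamSem

/-!
Put into a set `G₀` of generators the relations of `𝒳` and, for each ESO sentence true in `𝔄`,
a choice of witnessing relations. Build a chain `s₀ ⊆ s₁ ⊆ ⋯` of subsets of `A` of size at most
`|𝒳| + |τ| + ℵ₀`, where `s_{k+1}` is a Löwenheim–Skolem elementary substructure of `𝔄` for the
language with a symbol for each relation in `cl(G₀ ∪ {{a} : a ∈ s_k})`. A formula mentions
finitely many symbols, so by the Tarski–Vaught test the union `B` is elementary for the language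
naming all of `cl(G₀ ∪ {{b} : b ∈ B})`: for relations `Yᵢ` in this closure,
`𝔄 ⊨ φ(Y)` iff `𝔅 ⊨ φ(Y ∩ Bⁿ)`. Hence the trace `Y ↦ Y ∩ Bⁿ` is injective on the closure and
commutes with projections (the singletons `{b}` let one pick projection witnesses inside `B`),
so its inverse is the required elementary team map, and it carries the ESO witnesses to `𝔅`.
-/

namespace FirstOrder.Language

open Cardinal

variable {L : FirstOrder.Language.{u, v}} {M : Type w} [L.Structure M]

theorem exists_elementarySubstructure_card_le (s : Set M) {κ : Cardinal.{w}} (hκ : ℵ₀ ≤ κ)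
    (hs : #s ≤ κ) (hL : lift.{w} L.card ≤ lift.{max u v} κ) :
    ∃ S : L.ElementarySubstructure M, s ⊆ S ∧ #S ≤ κ := by
  rcases le_or_gt κ #M with hM | hM
  · obtain ⟨S, hsS, hS⟩ :=
      exists_elementarySubstructure_card_eq L s κ hκ (by simpa using hs) hL (by simpa using hM)
    exact ⟨S, hsS, (lift_inj.1 hS).le⟩
  · exact ⟨⊤, subset_univ s, (mk_subtype_le _).trans hM.le⟩

theorem ElementarySubstructure.exists_mem_realize_snoc (S : L.ElementarySubstructure M) {n : ℕ}
    (φ : L.BoundedFormula Empty (n + 1)) {x : Fin n → M} (hx : ∀ i, x i ∈ S) {a : M}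
    (ha : φ.Realize default (Fin.snoc x a)) : ∃ b ∈ S, φ.Realize default (Fin.snoc x b) := by
  let x' : Fin n → S := fun i => ⟨x i, hx i⟩
  have hv : (S.subtype ∘ default : Empty → M) = default := Subsingleton.elim _ _
  have hex : φ.ex.Realize (S.subtype ∘ default) (S.subtype ∘ x') := by
    rw [hv, BoundedFormula.realize_ex]
    exact ⟨a, ha⟩
  obtain ⟨b, hb⟩ := BoundedFormula.realize_ex.1 ((S.subtype.map_boundedFormula _ _ _).1 hex)
  refine ⟨b, b.2, ?_⟩
  have := (S.subtype.map_boundedFormula φ default (Fin.snoc x' b)).2 hb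
  rwa [hv, Fin.comp_snoc] at this

end FirstOrder.Language

namespace TeamSem

open Cardinal

section Closure

variable (L : FirstOrder.Language.{u, v}) {A : Type w} [L.Structure A]

inductive Cl (G : Set (Σ n, Set (Fin n → A))) : ∀ n : ℕ, Set (Fin n → A) → Prop
  | base {n X} : ⟨n, X⟩ ∈ G → Cl G n X
  | empty (n) : Cl G n ∅
  | univ (n) : Cl G n univ
  | inter {n X Y} : Cl G n X → Cl G n Y → Cl G n (X ∩ Y)
  | prod {n m X Y} : Cl G n X → Cl G m Y → Cl G (n + m) (teamProd X Y)
  | proj {n m} (ι : Fin m → Fin n) {X} : Cl G n X → Cl G m (teamProj ι X)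
  | diag : Cl G 2 (diag A)
  | rel {n} (R : L.Relations n) : Cl G n (relSet L A R)
  | graph {n} (F : L.Functions n) : Cl G (n + 1) (funGraph L A F)

variable {L} {G G' : Set (Σ n, Set (Fin n → A))}

theorem Cl.mono (hG : G ⊆ G') {n : ℕ} {X : Set (Fin n → A)} (h : Cl L G n X) : Cl L G' n X := by
  induction h with
  | base h => exact .base (hG h)
  | empty n => exact .empty n
  | univ n => exact .univ n
  | inter _ _ ihX ihY => exact ihX.inter ihY
  | prod _ _ ihX ihY => exact ihX.prod ihY
  | proj ι _ ih => exact ih.proj ι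
  | diag => exact .diag
  | rel R => exact .rel R
  | graph F => exact .graph F

theorem Cl.iInter {n m : ℕ} {X : Fin m → Set (Fin n → A)} (h : ∀ j, Cl L G n (X j)) :
    Cl L G n (⋂ j, X j) := by
  induction m with
  | zero => simpa using Cl.univ n
  | succ m ih =>
    have hsplit : (⋂ j, X j) = X 0 ∩ ⋂ j : Fin m, X j.succ := by
      ext
      simp [Fin.forall_fin_succ]
    rw [hsplit]
    exact (h 0).inter (ih fun j => h j.succ)

theorem Cl.setOf_apply_eq {n : ℕ} (i : Fin n) {c : A} (hc : Cl L G 1 {fun _ => c}) :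
    Cl L G n {w | w i = c} := by
  classical
  let σ : Fin n → Fin (1 + n) := fun j => if j = i then Fin.castAdd n 0 else Fin.natAdd 1 j
  convert (hc.prod (.univ n)).proj σ using 1
  ext w
  constructor
  · intro (hw : w i = c)
    refine ⟨Fin.append (fun _ => c) w, ⟨?_, trivial⟩, ?_⟩
    · funext j
      simp
    · funext j
      by_cases hj : j = i <;> simp [σ, hj, hw]
  · rintro ⟨u, ⟨hu, -⟩, rfl⟩
    simpa [σ] using congrFun hu 0

variable (L G) in
theorem isClosedFamily_cl : IsClosedFamily L A fun n => {X | Cl L G n X} :=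
  ⟨.empty, .univ, fun _ _ _ => .inter, fun _ _ _ _ => .prod, fun _ _ ι _ => .proj ι, .diag,
    fun _ => .rel, fun _ => .graph⟩

end Closure

section Cardinality

inductive RelOp : ℕ → Type
  | inter : RelOp 2
  | prod : RelOp 2
  | proj (n m : ℕ) (ι : Fin m → Fin n) : RelOp 1

instance : Countable (Σ k, RelOp k) := by
  let code : (Σ k, RelOp k) → Bool ⊕ (Σ n m : ℕ, Fin m → Fin n)
    | ⟨_, .inter⟩ => .inl true
    | ⟨_, .prod⟩ => .inl false
    | ⟨_, .proj n m ι⟩ => .inr ⟨n, m, ι⟩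
  refine Function.Injective.countable (f := code) ?_
  rintro ⟨_, _ | _ | ⟨n, m, ι⟩⟩ ⟨_, _ | _ | ⟨n', m', ι'⟩⟩ h <;> simp only [code, reduceCtorEq,
    Sum.inl.injEq, Sum.inr.injEq, Bool.true_eq_false, Bool.false_eq_true] at h ⊢
  obtain ⟨rfl, h⟩ := Sigma.mk.inj_iff.1 h
  obtain ⟨rfl, rfl⟩ := Sigma.mk.inj_iff.1 (eq_of_heq h)
  rfl

-- `cl G` lies in the substructure generated by `G ∪ basicRels L` for these operations,
-- which is how its cardinality is bounded.
def relOpLang : FirstOrder.Language.{0, 0} := ⟨RelOp, fun _ => Empty⟩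

variable {A : Type u}

/-- `p` read as an `n`-ary relation; it is empty unless `p` has arity `n`. -/
def asArity (n : ℕ) (p : Σ k, Set (Fin k → A)) : Set (Fin n → A) :=
  {v | (⟨n, v⟩ : Σ k, Fin k → A) ∈ Sigma.mk p.1 '' p.2}

@[simp]
theorem asArity_mk {n : ℕ} (X : Set (Fin n → A)) : asArity n ⟨n, X⟩ = X := by
  ext v
  simp [asArity]

instance : relOpLang.Structure (Σ n, Set (Fin n → A)) where
  funMap
    | .inter, X => ⟨(X 0).1, (X 0).2 ∩ asArity (X 0).1 (X 1)⟩
    | .prod, X => ⟨(X 0).1 + (X 1).1, teamProd (X 0).2 (X 1).2⟩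
    | .proj n m ι, X => ⟨m, teamProj ι (asArity n (X 0))⟩
  RelMap r := r.elim

variable (L : FirstOrder.Language.{u, u}) [L.Structure A]

def basicRels : Set (Σ n, Set (Fin n → A)) :=
  range (fun n => ⟨n, ∅⟩) ∪ range (fun n => ⟨n, univ⟩) ∪ {⟨2, diag A⟩} ∪
    range (fun R : Σ n, L.Relations n => ⟨R.1, relSet L A R.2⟩) ∪
    range (fun F : Σ n, L.Functions n => ⟨F.1 + 1, funGraph L A F.2⟩)

theorem mk_basicRels_le : #(basicRels L (A := A)) ≤ L.card + ℵ₀ := by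
  have hsymb : L.card = #(Σ n, L.Functions n) + #(Σ n, L.Relations n) := by
    simp [Language.card, Language.Symbols, mk_sum]
  calc #(basicRels L (A := A))
      ≤ ℵ₀ + ℵ₀ + ℵ₀ + #(Σ n, L.Relations n) + #(Σ n, L.Functions n) := by
        refine (mk_union_le _ _).trans (add_le_add ((mk_union_le _ _).trans
          (add_le_add ?_ mk_range_le)) mk_range_le)
        exact (mk_union_le _ _).trans (add_le_add ((mk_union_le _ _).trans
          (add_le_add (countable_range _).le_aleph0 (countable_range _).le_aleph0))
          (countable_singleton _).le_aleph0)
    _ = L.card + ℵ₀ := by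
        rw [hsymb, aleph0_add_aleph0, aleph0_add_aleph0]
        ring

theorem Cl.mem_closure {G : Set (Σ n, Set (Fin n → A))} {n : ℕ} {X : Set (Fin n → A)}
    (h : Cl L G n X) : ⟨n, X⟩ ∈ Substructure.closure relOpLang (G ∪ basicRels L) := by
  let C := Substructure.closure relOpLang (G ∪ basicRels L)
  have hC : G ∪ basicRels L ⊆ C := Substructure.subset_closure
  induction h with
  | base h => exact hC (Or.inl h)
  | empty n => exact hC (Or.inr (by simp [basicRels]))
  | univ n => exact hC (Or.inr (by simp [basicRels]))
  | diag => exact hC (Or.inr (by simp [basicRels]))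
  | rel R => exact hC (Or.inr (by simp [basicRels]))
  | graph F => exact hC (Or.inr (by simp [basicRels]))
  | @inter n X Y _ _ ihX ihY =>
    have h : (⟨n, X ∩ asArity n ⟨n, Y⟩⟩ : Σ n, Set (Fin n → A)) ∈ C :=
      C.fun_mem RelOp.inter ![⟨n, X⟩, ⟨n, Y⟩] (Fin.forall_fin_two.2 ⟨ihX, ihY⟩)
    rwa [asArity_mk] at h
  | @prod n m X Y _ _ ihX ihY =>
    exact C.fun_mem RelOp.prod ![⟨n, X⟩, ⟨m, Y⟩] (Fin.forall_fin_two.2 ⟨ihX, ihY⟩)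
  | @proj n m ι X _ ih =>
    have h : (⟨m, teamProj ι (asArity n ⟨n, X⟩)⟩ : Σ n, Set (Fin n → A)) ∈ C :=
      C.fun_mem (RelOp.proj n m ι) ![⟨n, X⟩] (Fin.forall_fin_one.2 ih)
    rwa [asArity_mk] at h

theorem mk_cl_le (G : Set (Σ n, Set (Fin n → A))) :
    #(Σ n, {X // Cl L G n X}) ≤ #G + L.card + ℵ₀ := by
  have hinj : Function.Injective fun p : Σ n, {X // Cl L G n X} =>
      (⟨⟨p.1, p.2.1⟩, p.2.2.mem_closure L⟩ : Substructure.closure relOpLang (G ∪ basicRels L)) := by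
    rintro ⟨n, X, hX⟩ ⟨m, Y, hY⟩ hXY
    obtain ⟨rfl, hXY⟩ := Sigma.mk.inj_iff.1 (congrArg Subtype.val hXY)
    cases eq_of_heq hXY
    rfl
  calc #(Σ n, {X // Cl L G n X})
      ≤ #(Substructure.closure relOpLang (G ∪ basicRels L)) := mk_le_of_injective hinj
    _ ≤ max ℵ₀ (#↥(G ∪ basicRels L) + lift #(Σ k, relOpLang.Functions k)) := by
        simpa only [lift_uzero] using
          Substructure.lift_card_closure_le (L := relOpLang) (s := G ∪ basicRels L)
    _ ≤ max ℵ₀ (#G + (L.card + ℵ₀) + ℵ₀) := by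
        gcongr
        · exact (mk_union_le _ _).trans (add_le_add le_rfl (mk_basicRels_le L))
        · exact lift_le_aleph0.2 (mk_le_aleph0 (α := Σ k, RelOp k))
    _ = #G + L.card + ℵ₀ := by
        rw [max_eq_right le_add_self, add_assoc #G, add_assoc, aleph0_add_aleph0, ← add_assoc]

end Cardinality

section Chain

variable (L : FirstOrder.Language.{u, u}) {A : Type u} [L.Structure A]
  (G₀ : Set (Σ n, Set (Fin n → A)))

def withSingletons (s : Set A) : Set (Σ n, Set (Fin n → A)) :=
  G₀ ∪ (fun a => ⟨1, {fun _ => a}⟩) '' s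

theorem withSingletons_mono {s t : Set A} (h : s ⊆ t) :
    withSingletons G₀ s ⊆ withSingletons G₀ t :=
  union_subset_union_right _ (image_mono h)

theorem mk_withSingletons_le (s : Set A) : #(withSingletons G₀ s) ≤ #G₀ + #s :=
  (mk_union_le _ _).trans (add_le_add le_rfl mk_image_le)

theorem cl_withSingletons_singleton {s : Set A} {a : A} (ha : a ∈ s) :
    Cl L (withSingletons G₀ s) 1 {fun _ => a} :=
  .base (Or.inr ⟨a, ha, rfl⟩)

def clLang (s : Set A) : FirstOrder.Language.{u, u} where
  Functions _ := PEmpty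
  Relations n := {X : Set (Fin n → A) // Cl L (withSingletons G₀ s) n X}

instance (s : Set A) : (clLang L G₀ s).Structure A where
  funMap f := f.elim
  RelMap R v := v ∈ R.1

abbrev expLang (s : Set A) : FirstOrder.Language.{u, u} := L.sum (clLang L G₀ s)

def clLang.inclusion {s t : Set A} (h : s ⊆ t) : clLang L G₀ s →ᴸ clLang L G₀ t where
  onFunction := fun {_} f => f.elim
  onRelation := fun {_} R => ⟨R.1, R.2.mono (withSingletons_mono G₀ h)⟩

instance {s t : Set A} (h : s ⊆ t) : (clLang.inclusion L G₀ h).IsExpansionOn A :=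
  ⟨fun f => f.elim, fun _ _ => rfl⟩

abbrev expLang.inclusion {s t : Set A} (h : s ⊆ t) : expLang L G₀ s →ᴸ expLang L G₀ t :=
  (LHom.id L).sumMap (clLang.inclusion L G₀ h)

theorem card_clLang_le (s : Set A) : (clLang L G₀ s).card ≤ #G₀ + #s + L.card + ℵ₀ := by
  have hfun : #(Σ n, (clLang L G₀ s).Functions n) = 0 := mk_eq_zero_iff.2 ⟨fun p => p.2.elim⟩
  rw [Language.card, Language.Symbols, mk_sum, hfun, lift_zero, zero_add, lift_id]
  exact (mk_cl_le L _).trans (by gcongr; exact mk_withSingletons_le G₀ s)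

theorem card_expLang_le {κ : Cardinal.{u}} (hκ : ℵ₀ ≤ κ) (hG₀ : #G₀ ≤ κ) (hL : L.card ≤ κ)
    {s : Set A} (hs : #s ≤ κ) : (expLang L G₀ s).card ≤ κ := by
  rw [card_sum, lift_id, lift_id]
  refine add_le_of_le hκ hL ((card_clLang_le L G₀ s).trans ?_)
  exact add_le_of_le hκ (add_le_of_le hκ (add_le_of_le hκ hG₀ hs) hL) hκ

theorem exists_stageSub (s : Set A) : ∃ S : (expLang L G₀ s).ElementarySubstructure A,
    s ⊆ S ∧ #S ≤ max ℵ₀ (#s + (expLang L G₀ s).card) :=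
  exists_elementarySubstructure_card_le s (le_max_left _ _) (le_max_of_le_right le_self_add)
    (by simp)

noncomputable def stageSub (s : Set A) : (expLang L G₀ s).ElementarySubstructure A :=
  Classical.choose (exists_stageSub L G₀ s)

theorem subset_stageSub (s : Set A) : s ⊆ stageSub L G₀ s :=
  (Classical.choose_spec (exists_stageSub L G₀ s)).1

theorem mk_stageSub_le (s : Set A) :
    #(stageSub L G₀ s) ≤ max ℵ₀ (#s + (expLang L G₀ s).card) :=
  (Classical.choose_spec (exists_stageSub L G₀ s)).2

noncomputable def stage : ℕ → Set A
  | 0 => ∅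
  | k + 1 => stageSub L G₀ (stage k)

abbrev limitSet : Set A := ⋃ k, stage L G₀ k

theorem stage_mono : Monotone (stage L G₀) :=
  monotone_nat_of_le_succ fun k => subset_stageSub L G₀ (stage L G₀ k)

theorem mk_limitSet_le {κ : Cardinal.{u}} (hκ : ℵ₀ ≤ κ) (hG₀ : #G₀ ≤ κ) (hL : L.card ≤ κ) :
    #(limitSet L G₀) ≤ κ := by
  have hstage : ∀ k, #(stage L G₀ k) ≤ κ := by
    intro k
    induction k with
    | zero => simp [stage]
    | succ k ih =>
      exact (mk_stageSub_le L G₀ _).trans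
        (max_le hκ (add_le_of_le hκ ih (card_expLang_le L G₀ hκ hG₀ hL ih)))
  have := (mk_iUnion_le_sum_mk_lift (f := stage L G₀)).trans (sum_le_sum _ _ hstage)
  rwa [lift_uzero, sum_const, mk_nat, lift_aleph0, lift_uzero, aleph0_mul_eq hκ] at this

theorem exists_forall_mem_of_mem_iUnion {s : ℕ → Set A} (hs : Monotone s) {n : ℕ}
    {x : Fin n → A} (hx : ∀ i, x i ∈ ⋃ k, s k) : ∃ k, ∀ i, x i ∈ s k := by
  choose k hk using fun i => mem_iUnion.1 (hx i)
  exact ⟨Finset.univ.sup k, fun i => hs (Finset.le_sup (Finset.mem_univ i)) (hk i)⟩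

theorem exists_cl_of_cl_iUnion {s : ℕ → Set A} (hs : Monotone s) {n : ℕ} {X : Set (Fin n → A)}
    (h : Cl L (withSingletons G₀ (⋃ k, s k)) n X) : ∃ k, Cl L (withSingletons G₀ (s k)) n X := by
  have up {k l : ℕ} (hkl : k ≤ l) {n : ℕ} {X : Set (Fin n → A)}
      (h : Cl L (withSingletons G₀ (s k)) n X) : Cl L (withSingletons G₀ (s l)) n X :=
    h.mono (withSingletons_mono G₀ (hs hkl))
  induction h with
  | base h =>
    rcases h with h | ⟨a, ha, hX⟩
    · exact ⟨0, .base (Or.inl h)⟩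
    · obtain ⟨k, hk⟩ := mem_iUnion.1 ha
      exact ⟨k, .base (Or.inr ⟨a, hk, hX⟩)⟩
  | empty n => exact ⟨0, .empty n⟩
  | univ n => exact ⟨0, .univ n⟩
  | inter _ _ ihX ihY =>
    obtain ⟨⟨k, hX⟩, ⟨l, hY⟩⟩ := And.intro ihX ihY
    exact ⟨max k l, (up (le_max_left k l) hX).inter (up (le_max_right k l) hY)⟩
  | prod _ _ ihX ihY =>
    obtain ⟨⟨k, hX⟩, ⟨l, hY⟩⟩ := And.intro ihX ihY
    exact ⟨max k l, (up (le_max_left k l) hX).prod (up (le_max_right k l) hY)⟩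
  | proj ι _ ih =>
    obtain ⟨k, hX⟩ := ih
    exact ⟨k, hX.proj ι⟩
  | diag => exact ⟨0, .diag⟩
  | rel R => exact ⟨0, .rel R⟩
  | graph F => exact ⟨0, .graph F⟩

theorem exists_onTerm_eq {s t : Set A} (h : s ⊆ t) {γ : Type*} (τ : (expLang L G₀ t).Term γ) :
    ∃ τ₀ : (expLang L G₀ s).Term γ, (expLang.inclusion L G₀ h).onTerm τ₀ = τ := by
  induction τ with
  | var v => exact ⟨.var v, rfl⟩
  | func f ts ih =>
    rcases f with f | f
    · choose ts₀ hts₀ using ih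
      exact ⟨.func (Sum.inl f) ts₀, by simp only [LHom.onTerm, hts₀]; rfl⟩
    · exact f.elim

theorem exists_onBoundedFormula_eq {s : ℕ → Set A} (hs : Monotone s) {γ : Type*} {r : ℕ}
    (φ : (expLang L G₀ (⋃ k, s k)).BoundedFormula γ r) :
    ∃ k, ∀ l, k ≤ l → ∃ φ₀ : (expLang L G₀ (s l)).BoundedFormula γ r,
      (expLang.inclusion L G₀ (subset_iUnion s l)).onBoundedFormula φ₀ = φ := by
  induction φ with
  | falsum => exact ⟨0, fun l _ => ⟨.falsum, rfl⟩⟩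
  | equal t₁ t₂ =>
    refine ⟨0, fun l _ => ?_⟩
    obtain ⟨⟨t₁₀, h₁⟩, ⟨t₂₀, h₂⟩⟩ := And.intro (exists_onTerm_eq L G₀ (subset_iUnion s l) t₁)
      (exists_onTerm_eq L G₀ (subset_iUnion s l) t₂)
    exact ⟨.equal t₁₀ t₂₀, by simp only [LHom.onBoundedFormula, h₁, h₂]; rfl⟩
  | rel R ts =>
    have hR : ∃ k, ∀ l, k ≤ l → ∃ R₀ : (expLang L G₀ (s l)).Relations _,
        (expLang.inclusion L G₀ (subset_iUnion s l)).onRelation R₀ = R := by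
      rcases R with R | ⟨Y, hY⟩
      · exact ⟨0, fun l _ => ⟨Sum.inl R, rfl⟩⟩
      · obtain ⟨k, hk⟩ := exists_cl_of_cl_iUnion L G₀ hs hY
        exact ⟨k, fun l hl => ⟨Sum.inr ⟨Y, hk.mono (withSingletons_mono G₀ (hs hl))⟩, rfl⟩⟩
    obtain ⟨k, hk⟩ := hR
    refine ⟨k, fun l hl => ?_⟩
    obtain ⟨R₀, rfl⟩ := hk l hl
    choose ts₀ hts₀ using fun i => exists_onTerm_eq L G₀ (subset_iUnion s l) (ts i)
    exact ⟨.rel R₀ ts₀, congrArg (BoundedFormula.rel _) (funext hts₀)⟩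
  | imp φ₁ φ₂ ih₁ ih₂ =>
    obtain ⟨⟨k₁, h₁⟩, ⟨k₂, h₂⟩⟩ := And.intro ih₁ ih₂
    refine ⟨max k₁ k₂, fun l hl => ?_⟩
    obtain ⟨⟨φ₁₀, rfl⟩, ⟨φ₂₀, rfl⟩⟩ :=
      And.intro (h₁ l (le_of_max_le_left hl)) (h₂ l (le_of_max_le_right hl))
    exact ⟨φ₁₀.imp φ₂₀, rfl⟩
  | all φ ih =>
    obtain ⟨k, hk⟩ := ih
    refine ⟨k, fun l hl => ?_⟩
    obtain ⟨φ₀, rfl⟩ := hk l hl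
    exact ⟨φ₀.all, rfl⟩

def limitSub : (expLang L G₀ (limitSet L G₀)).Substructure A where
  carrier := limitSet L G₀
  fun_mem {n} f x hx := by
    rcases f with f | f
    · obtain ⟨k, hk⟩ := exists_forall_mem_of_mem_iUnion (stage_mono L G₀) hx
      exact subset_iUnion _ (k + 1)
        ((stageSub L G₀ (stage L G₀ k)).toSubstructure.fun_mem (Sum.inl f) x
          fun i => subset_stageSub L G₀ _ (hk i))
    · exact f.elim

theorem limitSub_isElementary : (limitSub L G₀).IsElementary := by
  refine Substructure.isElementary_of_exists _ fun n φ x a ha => ?_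
  obtain ⟨k, hk⟩ := exists_onBoundedFormula_eq L G₀ (stage_mono L G₀) φ
  obtain ⟨l, hl⟩ := exists_forall_mem_of_mem_iUnion (stage_mono L G₀) fun i => (x i).2
  obtain ⟨φ₀, rfl⟩ := hk (max k l) (le_max_left k l)
  rw [LHom.realize_onBoundedFormula] at ha
  obtain ⟨b, hb, hφ₀⟩ := (stageSub L G₀ _).exists_mem_realize_snoc φ₀
    (fun i => subset_stageSub L G₀ _ (stage_mono L G₀ (le_max_right k l) (hl i))) ha
  exact ⟨⟨b, subset_iUnion _ (max k l + 1) hb⟩, by rwa [LHom.realize_onBoundedFormula]⟩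

def limitES : (expLang L G₀ (limitSet L G₀)).ElementarySubstructure A :=
  ⟨limitSub L G₀, limitSub_isElementary L G₀⟩

end Chain

section Trace

variable {A : Type u} {T : Type v} [SetLike T A] (S : T)

def trace {n : ℕ} (Z : Set (Fin n → A)) : Set (Fin n → S) := {v | (↑) ∘ v ∈ Z}

theorem trace_diag : trace S (diag A) = diag S := by
  ext v
  exact Subtype.ext_iff.symm

theorem trace_singleton {n : ℕ} (b : S) : trace S {fun _ : Fin n => (b : A)} = {fun _ => b} := by
  ext v
  simp only [trace, mem_ofPred_eq, mem_singleton_iff]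
  exact ⟨fun h => funext fun i => Subtype.ext (congrFun h i), fun h => h ▸ rfl⟩

end Trace

section Sentences

variable (L : FirstOrder.Language.{u, v}) {M : Type w} [L.Structure M]

def nonemptySentence (n : ℕ) : (L.sum (relLang 1 fun _ => n)).Sentence :=
  (Relations.boundedFormula (Sum.inr ⟨0, rfl⟩) fun i => Term.var (Sum.inr i)).exs

def subsetSentence (n : ℕ) : (L.sum (relLang 2 fun _ => n)).Sentence :=
  ((Relations.boundedFormula (Sum.inr ⟨0, rfl⟩) fun i => Term.var (Sum.inr i)).imp
    (Relations.boundedFormula (Sum.inr ⟨1, rfl⟩) fun i => Term.var (Sum.inr i))).alls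

theorem realizeWith_nonemptySentence {n : ℕ} (S : Fin 1 → Set (Fin n → M)) :
    RealizeWith M (nonemptySentence L n) S ↔ (S 0).Nonempty :=
  letI := relStructure S
  BoundedFormula.realize_exs

theorem realizeWith_subsetSentence {n : ℕ} (S : Fin 2 → Set (Fin n → M)) :
    RealizeWith M (subsetSentence L n) S ↔ S 0 ⊆ S 1 :=
  letI := relStructure S
  BoundedFormula.realize_alls

end Sentences

section Team

variable (L : FirstOrder.Language.{u, u}) {A : Type u} [L.Structure A]
  (G₀ : Set (Σ n, Set (Fin n → A)))

abbrev limitCl (n : ℕ) : Set (Set (Fin n → A)) := {Y | Cl L (withSingletons G₀ (limitSet L G₀)) n Y}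

noncomputable instance : L.Structure (limitES L G₀) :=
  (LHom.sumInl : L →ᴸ expLang L G₀ (limitSet L G₀)).reduct _

theorem trace_funGraph {n : ℕ} (F : L.Functions n) :
    trace (limitES L G₀) (funGraph L A F) = funGraph L (limitES L G₀) F := by
  ext v
  simp only [trace, funGraph, mem_ofPred_eq]
  rw [Subtype.ext_iff]
  rfl

theorem realizeWith_trace_iff {k : ℕ} {ar : Fin k → ℕ} (φ : (L.sum (relLang k ar)).Sentence)
    {Y : ∀ i, Set (Fin (ar i) → A)} (hY : ∀ i, Y i ∈ limitCl L G₀ (ar i)) :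
    RealizeWith (limitES L G₀) φ (fun i => trace (limitES L G₀) (Y i)) ↔ RealizeWith A φ Y := by
  -- Send the fresh symbol `Rᵢ` to the symbol naming `Yᵢ`; then use that `limitES` is elementary.
  let ϕ : L.sum (relLang k ar) →ᴸ expLang L G₀ (limitSet L G₀) := (LHom.id L).sumMap
    ⟨fun {_} f => f.elim, fun {_} R => ⟨{v | (fun j => v (Fin.cast R.2 j)) ∈ Y R.1}, by
      obtain ⟨i, rfl⟩ := R
      exact hY i⟩⟩
  let := relStructure Y
  let := relStructure fun i => trace (limitES L G₀) (Y i)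
  have : ϕ.IsExpansionOn A := ⟨fun f _ => by rcases f with f | f; exacts [rfl, f.elim],
    fun R _ => by rcases R with R | R <;> rfl⟩
  have : ϕ.IsExpansionOn (limitES L G₀) := ⟨fun f _ => by rcases f with f | f; exacts [rfl, f.elim],
    fun R _ => by rcases R with R | R <;> rfl⟩
  calc RealizeWith (limitES L G₀) φ _ ↔ limitES L G₀ ⊨ ϕ.onSentence φ :=
        (LHom.realize_onSentence _ _ _).symm
    _ ↔ A ⊨ ϕ.onSentence φ := (limitES L G₀).realize_sentence _
    _ ↔ RealizeWith A φ Y := LHom.realize_onSentence _ _ _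

theorem trace_nonempty {n : ℕ} {Z : Set (Fin n → A)} (hZ : Z ∈ limitCl L G₀ n) (h : Z.Nonempty) :
    (trace (limitES L G₀) Z).Nonempty := by
  have := realizeWith_trace_iff L G₀ (nonemptySentence L n) (Y := fun _ => Z) fun _ => hZ
  rw [realizeWith_nonemptySentence, realizeWith_nonemptySentence] at this
  exact this.2 h

theorem subset_of_trace_subset {n : ℕ} {Z₁ Z₂ : Set (Fin n → A)} (h₁ : Z₁ ∈ limitCl L G₀ n)
    (h₂ : Z₂ ∈ limitCl L G₀ n) (h : trace (limitES L G₀) Z₁ ⊆ trace (limitES L G₀) Z₂) :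
    Z₁ ⊆ Z₂ := by
  have := realizeWith_trace_iff L G₀ (subsetSentence L n) (Y := ![Z₁, Z₂])
    (Fin.forall_fin_two.2 ⟨h₁, h₂⟩)
  rw [realizeWith_subsetSentence, realizeWith_subsetSentence] at this
  exact this.1 h

theorem injOn_trace (n : ℕ) : InjOn (trace (limitES L G₀)) (limitCl L G₀ n) :=
  fun _ h₁ _ h₂ h => (subset_of_trace_subset L G₀ h₁ h₂ h.le).antisymm
    (subset_of_trace_subset L G₀ h₂ h₁ h.ge)

theorem trace_teamProj {n m : ℕ} (ι : Fin m → Fin n) {Y : Set (Fin n → A)}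
    (hY : Y ∈ limitCl L G₀ n) :
    trace (limitES L G₀) (teamProj ι Y) = teamProj ι (trace (limitES L G₀) Y) := by
  refine Subset.antisymm (fun b ⟨a, haY, hab⟩ => ?_) ?_
  · -- The preimages of `b` in `Y` form a nonempty relation of the closure, so one lies in `B`.
    have hZ : Y ∩ ⋂ j, {w | w (ι j) = b j} ∈ limitCl L G₀ n :=
      Cl.inter hY (Cl.iInter fun j =>
        Cl.setOf_apply_eq (ι j) (cl_withSingletons_singleton L G₀ (b j).2))
    obtain ⟨v, hvY, hv⟩ := trace_nonempty L G₀ hZ ⟨a, haY, mem_iInter.2 fun j => congrFun hab j⟩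
    exact ⟨v, hvY, funext fun j => Subtype.ext (mem_iInter.1 hv j)⟩
  · rintro _ ⟨v, hv, rfl⟩
    exact ⟨Subtype.val ∘ v, hv, rfl⟩

theorem isClosedFamily_image_trace :
    IsClosedFamily L (limitES L G₀) fun n => trace (limitES L G₀) '' limitCl L G₀ n where
  empty_mem n := ⟨∅, .empty n, rfl⟩
  univ_mem n := ⟨univ, .univ n, rfl⟩
  inter_mem := by
    rintro n _ _ ⟨Y₁, h₁, rfl⟩ ⟨Y₂, h₂, rfl⟩
    exact ⟨_, h₁.inter h₂, rfl⟩
  prod_mem := by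
    rintro n m _ _ ⟨Y₁, h₁, rfl⟩ ⟨Y₂, h₂, rfl⟩
    exact ⟨_, h₁.prod h₂, rfl⟩
  proj_mem := by
    rintro n m ι _ ⟨Y, hY, rfl⟩
    exact ⟨_, hY.proj ι, trace_teamProj L G₀ ι hY⟩
  diag_mem := ⟨_, .diag, trace_diag _⟩
  rel_mem _ R := ⟨_, .rel R, rfl⟩
  graph_mem _ F := ⟨_, .graph F, trace_funGraph L G₀ F⟩

theorem invFunOn_trace_image (n : ℕ) :
    Function.invFunOn (trace (limitES L G₀)) (limitCl L G₀ n) ''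
      (trace (limitES L G₀) '' limitCl L G₀ n) = limitCl L G₀ n :=
  (injOn_trace L G₀ n).invFunOn_image subset_rfl

noncomputable def traceMap : PartialTeamMap L (limitES L G₀) A where
  dom n := trace (limitES L G₀) '' limitCl L G₀ n
  toFun n := Function.invFunOn (trace (limitES L G₀)) (limitCl L G₀ n)
  dom_closed := isClosedFamily_image_trace L G₀
  ran_closed := by
    simp only [invFunOn_trace_image]
    exact isClosedFamily_cl L _
  map_empty n := (injOn_trace L G₀ n).leftInvOn_invFunOn (Cl.empty n)

theorem traceMap_ran (n : ℕ) : (traceMap L G₀).ran n = limitCl L G₀ n :=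
  invFunOn_trace_image L G₀ n

theorem traceMap_elementTotal : (traceMap L G₀).ElementTotal := fun b =>
  ⟨{fun _ => (b : A)}, cl_withSingletons_singleton L G₀ b.2, trace_singleton _ b⟩

theorem traceMap_isElementary : (traceMap L G₀).IsElementary := by
  intro k ar φ X hX _
  choose Y hY hYX using hX
  obtain rfl : X = fun i => trace (limitES L G₀) (Y i) := funext fun i => (hYX i).symm
  have hinv : ∀ i, (traceMap L G₀).toFun (ar i) (trace (limitES L G₀) (Y i)) = Y i :=
    fun i => (injOn_trace L G₀ _).leftInvOn_invFunOn (hY i)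
  rw [show (fun i => (traceMap L G₀).toFun (ar i) (trace (limitES L G₀) (Y i))) = Y from
    funext hinv]
  exact realizeWith_trace_iff L G₀ φ hY

end Team

section Counting

theorem sum_le_of_countable {ι : Type} [Countable ι] {κ : Cardinal.{u}} (hκ : ℵ₀ ≤ κ)
    {f : ι → Cardinal.{u}} (hf : ∀ i, f i ≤ κ) : sum f ≤ κ := by
  calc sum f ≤ sum fun _ => κ := sum_le_sum _ _ hf
    _ = lift #ι * κ := by rw [sum_const, lift_uzero]
    _ ≤ ℵ₀ * κ := mul_le_mul' (lift_le_aleph0.2 mk_le_aleph0) le_rfl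
    _ = κ := aleph0_mul_eq hκ

variable (L : FirstOrder.Language.{u, u})

theorem mk_sentence_sum_relLang_le (k : ℕ) (ar : Fin k → ℕ) :
    #((L.sum (relLang k ar)).Sentence) ≤ L.card + ℵ₀ := by
  have : Countable (relLang k ar).Symbols := by
    have : ∀ n, Countable ((relLang k ar).Relations n) := fun n =>
      inferInstanceAs (Countable {i : Fin k // ar i = n})
    have : ∀ n, Countable ((relLang k ar).Functions n) := fun _ => inferInstanceAs (Countable Empty)
    infer_instance
  calc #((L.sum (relLang k ar)).Sentence)
      ≤ #(Σ n, (L.sum (relLang k ar)).BoundedFormula Empty n) :=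
        mk_le_of_injective (f := Sigma.mk 0) sigma_mk_injective
    _ ≤ max ℵ₀ (lift #Empty + lift (L.sum (relLang k ar)).card) := BoundedFormula.card_le
    _ ≤ L.card + ℵ₀ := by
        rw [card_sum]
        simp only [mk_empty, lift_zero, zero_add, lift_uzero]
        exact max_le le_add_self
          (add_le_add le_rfl (lift_le_aleph0.2 (mk_le_aleph0 (α := (relLang k ar).Symbols))))

theorem mk_esoSentence_le : #(ESOSentence L) ≤ L.card + ℵ₀ := by
  have hsurj : Function.Surjective fun p : Σ k : ℕ, Σ ar : Fin k → ℕ,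
      (L.sum (relLang k ar)).Sentence => (⟨p.1, p.2.1, p.2.2⟩ : ESOSentence L) :=
    fun ψ => ⟨⟨ψ.k, ψ.ar, ψ.toSentence⟩, rfl⟩
  refine (mk_le_of_surjective hsurj).trans ?_
  rw [mk_sigma]
  refine sum_le_of_countable le_add_self fun k => ?_
  rw [mk_sigma]
  exact sum_le_of_countable le_add_self (mk_sentence_sum_relLang_le L k)

theorem mk_sigma_esoSentence_le : #(Σ ψ : ESOSentence L, Fin ψ.k) ≤ L.card + ℵ₀ := by
  calc #(Σ ψ : ESOSentence L, Fin ψ.k)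
      ≤ sum fun _ : ESOSentence L => (ℵ₀ : Cardinal.{0}) := by
        rw [mk_sigma]
        exact sum_le_sum _ _ fun ψ : ESOSentence L => mk_le_aleph0 (α := Fin ψ.k)
    _ = #(ESOSentence L) * ℵ₀ := by simp
    _ ≤ (L.card + ℵ₀) * ℵ₀ := mul_le_mul' (mk_esoSentence_le L) le_rfl
    _ = L.card + ℵ₀ := mul_aleph0_eq le_add_self

end Counting

/-- **Weak Löwenheim–Skolem theorem for team semantics.**
For every `τ`-structure `𝔄` and family `𝒳` of relations on `𝔄`, there are a
`τ`-structure `𝔅` of cardinality at most `|𝒳| + |τ| + ℵ₀` and an element-total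
partial elementary team map `ι : 𝔅 → 𝔄` such that `𝒳 ⊆ ran ι` and `𝔅` satisfies
every existential second-order sentence satisfied by `𝔄`. -/
theorem weak_loewenheim_skolem
    {L : FirstOrder.Language.{u, u}} {A : Type u} [L.Structure A]
    (𝒳 : ∀ n : ℕ, Set (Set (Fin n → A))) :
    ∃ (B : Type u) (sB : L.Structure B), letI := sB
      Cardinal.mk B ≤ Cardinal.mk (Σ n : ℕ, ↥(𝒳 n)) + L.card + Cardinal.aleph0 ∧
      ∃ ι : PartialTeamMap L B A, ι.ElementTotal ∧ ι.IsElementary ∧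
        (∀ n, 𝒳 n ⊆ ι.ran n) ∧
        ∀ ψ : ESOSentence L, ψ.Realize A → ψ.Realize B := by
  have hwit (ψ : ESOSentence L) :
      ∃ S : ∀ i, Set (Fin (ψ.ar i) → A), ψ.Realize A → RealizeWith A ψ.toSentence S :=
    (em (ψ.Realize A)).elim (fun ⟨S, hS⟩ => ⟨S, fun _ => hS⟩)
      fun h => ⟨fun _ => ∅, fun h' => (h h').elim⟩
  choose S hS using hwit
  let G₀ : Set (Σ n, Set (Fin n → A)) := range (fun X : Σ n, 𝒳 n => ⟨X.1, X.2⟩) ∪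
    range (fun w : (Σ ψ : ESOSentence L, Fin ψ.k) => ⟨_, S w.1 w.2⟩)
  have hκ : ℵ₀ ≤ #(Σ n, 𝒳 n) + L.card + ℵ₀ := le_add_self
  have hL : L.card ≤ #(Σ n, 𝒳 n) + L.card + ℵ₀ := le_add_self.trans le_self_add
  have hG₀ : #G₀ ≤ #(Σ n, 𝒳 n) + L.card + ℵ₀ := by
    refine (mk_union_le _ _).trans (add_le_of_le hκ (mk_range_le.trans ?_)
      (mk_range_le.trans ((mk_sigma_esoSentence_le L).trans ?_)))
    · exact le_self_add.trans le_self_add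
    · exact add_le_of_le hκ hL hκ
  refine ⟨limitES L G₀, inferInstance, mk_limitSet_le L G₀ hκ hG₀ hL, traceMap L G₀,
    traceMap_elementTotal L G₀, traceMap_isElementary L G₀, fun n X hX => ?_,
    fun ψ hψ => ⟨_, (realizeWith_trace_iff L G₀ ψ.toSentence
      fun i => .base (Or.inl (Or.inr ⟨⟨ψ, i⟩, rfl⟩))).2 (hS ψ hψ)⟩⟩
  rw [traceMap_ran]
  exact .base (Or.inl (Or.inl ⟨⟨n, X, hX⟩, rfl⟩))

end TeamSem
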